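/- Let z = a+b√c in ℤ[√c] and write z^k = a_k + b_k√c. If n = pq is a Frobenius pseudoprime with parameters (a,b,c), p prime, and J(c/p) = -1, then p divides gcd(a_{q-1} - 1, b_{q-1}). -/

import Mathlib

/-- `n` is a Frobenius pseudoprime with parameters `(a, b, c)`:
a composite odd non-square natural number, coprime to `a*b*c`, with `c`
squarefree, Jacobi symbol `J(c/n) = -1`, satisfying
`(a + b√c)^n ≡ a - b√c (mod n)` in `ℤ[√c]`. -/
def IsFPP (a b c : ℤ) (n : ℕ) : Prop :=
  1 < n ∧ ¬ n.Prime ∧ Odd n ∧ ¬ IsSquare n ∧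
  IsCoprime (a * b * c) (n : ℤ) ∧ Squarefree c ∧ jacobiSym c n = -1 ∧
  (n : Zsqrtd c) ∣ ((⟨a, b⟩ : Zsqrtd c) ^ n - star (⟨a, b⟩ : Zsqrtd c))

/-!
Because `c` is a non-residue mod `p`, the Frobenius `w ↦ w ^ p` of `ℤ[√c]/(p)` is conjugation:
both are ring homomorphisms, and `√c ^ p = c ^ ((p - 1) / 2) • √c = -√c` by Euler's criterion.
Hence `z ^ (p q) ≡ z̄ ≡ z ^ p (mod p)`. As `p ∤ b`, the norm `a² - c b²` is prime to `p`, so `z` is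
invertible mod `p` and cancelling `z ^ p` gives `(z ^ (q - 1)) ^ p ≡ 1`, that is
`conj (z ^ (q - 1)) ≡ 1`; conjugating again, `z ^ (q - 1) ≡ 1 (mod p)`.
-/

open Zsqrtd

namespace Zsqrtd

variable {d : ℤ} {p : ℕ} [Fact p.Prime]

instance charP_quotient_span_natCast : CharP (ℤ√d ⧸ Ideal.span {(p : ℤ√d)}) p :=
  CharP.quotient _ p fun hunit => by
    have h : ((p : ℤ) : ℤ√d) ∣ ((1 : ℤ) : ℤ√d) := by simpa using isUnit_iff_dvd_one.mp hunit
    rw [intCast_dvd_intCast, Int.natCast_dvd_ofNat, Nat.dvd_one] at h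
    exact (Fact.out : p.Prime).ne_one h

local notation "π" => Ideal.Quotient.mk (Ideal.span {(p : ℤ√d)})

theorem mk_sqrtd_pow_prime (hd : legendreSym p d = -1) (hp : p ≠ 2) :
    π sqrtd ^ p = -π sqrtd := by
  have hodd := (Fact.out : p.Prime).odd_of_ne_two hp
  have hsq : π (sqrtd : ℤ√d) ^ 2 = ZMod.castHom dvd_rfl _ (d : ZMod p) := by
    rw [← map_pow, sq, dmuld, map_intCast, map_intCast]
  calc π sqrtd ^ p = (π sqrtd ^ 2) ^ (p / 2) * π sqrtd := by
        rw [← pow_mul, ← pow_succ, Nat.two_mul_div_two_add_one_of_odd hodd]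
    _ = -π sqrtd := by rw [hsq, ← map_pow, ← legendreSym.eq_pow, hd]; simp

theorem mk_pow_prime_eq_mk_star (hd : legendreSym p d = -1) (hp : p ≠ 2) (w : ℤ√d) :
    π w ^ p = π (star w) := by
  have hstar : star (sqrtd : ℤ√d) = -sqrtd := by ext <;> simp
  have h : (frobenius _ p).comp π = RingHom.comp π (starRingEnd (ℤ√d)) :=
    hom_ext _ _ (by
      simpa only [RingHom.comp_apply, frobenius_def, starRingEnd_apply, hstar, map_neg]
        using mk_sqrtd_pow_prime hd hp)
  exact congr($h w)

theorem not_dvd_norm (hd : legendreSym p d = -1) {w : ℤ√d} (hw : ¬ (p : ℤ) ∣ w.im) :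
    ¬ (p : ℤ) ∣ w.norm := by
  rw [← ZMod.intCast_zmod_eq_zero_iff_dvd] at hw ⊢
  intro hN
  refine (legendreSym.eq_neg_one_iff p).mp hd ⟨w.re / w.im, ?_⟩
  rw [norm_def] at hN
  push_cast at hN
  field_simp
  linear_combination -hN

theorem isUnit_mk_of_not_dvd_im (hd : legendreSym p d = -1) {w : ℤ√d} (hw : ¬ (p : ℤ) ∣ w.im) :
    IsUnit (π w) := by
  have hN : ((w.norm : ℤ) : ZMod p) ≠ 0 := by
    rw [Ne, ZMod.intCast_zmod_eq_zero_iff_dvd]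
    exact not_dvd_norm hd hw
  have : IsUnit (π (w * star w)) := by
    rw [← norm_eq_mul_conj, map_intCast,
      ← map_intCast (ZMod.castHom (dvd_refl p) (ℤ√d ⧸ Ideal.span {(p : ℤ√d)}))]
    exact (Ne.isUnit hN).map _
  exact isUnit_of_mul_isUnit_left (by rwa [map_mul] at this)

theorem natCast_dvd_pow_sub_one (hd : legendreSym p d = -1) (hp : p ≠ 2) {z : ℤ√d}
    (hz : ¬ (p : ℤ) ∣ z.im) {q : ℕ} (h : (p : ℤ√d) ∣ z ^ (p * (q + 1)) - star z) :
    (p : ℤ√d) ∣ z ^ q - 1 := by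
  rw [← Ideal.mem_span_singleton, ← Ideal.Quotient.eq] at h ⊢
  have hfrob := mk_pow_prime_eq_mk_star hd hp
  have hpow : (π z ^ q) ^ p = 1 := by
    rw [← ((isUnit_mk_of_not_dvd_im hd hz).pow p).mul_eq_right]
    calc (π z ^ q) ^ p * π z ^ p = π (z ^ (p * (q + 1))) := by rw [map_pow]; ring
      _ = π z ^ p := by rw [h, hfrob]
  have hstar : π (star (z ^ q)) = 1 := by rw [← hfrob, map_pow, hpow]
  rw [← star_star (z ^ q), map_one, ← hfrob, hstar, one_pow]

end Zsqrtd

/-- Corollary 2.2(a): writing z^k = a_k + b_k √c, if n = pq is an FPP with parameters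
(a,b,c), p prime and J(c/p) = -1, then p divides gcd(a_{q-1} - 1, b_{q-1}). -/
theorem stmt_6 (a b c : ℤ) (n p q : ℕ) (hn : IsFPP a b c n) (hpq : n = p * q)
    (hp : p.Prime) (hJ : jacobiSym c p = -1) :
    (p : ℤ) ∣ (Int.gcd (((⟨a, b⟩ : Zsqrtd c) ^ (q - 1)).re - 1)
      (((⟨a, b⟩ : Zsqrtd c) ^ (q - 1)).im) : ℤ) := by
  obtain ⟨hn1, -, hodd, -, hcop, -, -, hdvd⟩ := hn
  obtain ⟨q, rfl⟩ := Nat.exists_eq_add_one_of_ne_zero (n := q) (by rintro rfl; simp [hpq] at hn1)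
  subst hpq
  have : Fact p.Prime := ⟨hp⟩
  have hp2 : p ≠ 2 := by
    rintro rfl
    exact Nat.not_even_iff_odd.mpr hodd (even_two_mul _)
  have hd : legendreSym p c = -1 := by rwa [jacobiSym.legendreSym.to_jacobiSym]
  have hpn : p ∣ p * (q + 1) := dvd_mul_right p _
  have hb : ¬ (p : ℤ) ∣ b := fun hpb => (Nat.prime_iff_prime_int.mp hp).not_isUnit
    (hcop.isUnit_of_dvd' ((hpb.mul_left a).mul_right c) (Int.natCast_dvd_natCast.mpr hpn))
  have h := natCast_dvd_pow_sub_one hd hp2 hb ((Nat.cast_dvd_cast hpn).trans hdvd)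
  rw [← Int.cast_natCast, intCast_dvd] at h
  simpa using Int.dvd_coe_gcd h.1 h.2
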